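/- For each index i, the real function f(t) = ℓ(μ(t), B, ν), where μ(t) is μ with its i-th coordinate replaced by t, is differentiable at t = μ_i and its derivative equals ((ν + D)/(ν + q)) · (Ω·(y − μ))_i. -/

import Mathlib

open Matrix

/-- Multivariate t log-likelihood in the Cholesky precision parametrization `Ω = Bᵀ B`:
`ℓ(μ, B, ν) = log Γ((ν+D)/2) - log Γ(ν/2) - (D/2)·log ν - (D/2)·log π + log(det B)
  - ((ν+D)/2)·log(1 + q/ν)` with `q = ‖B(y-μ)‖²`. -/
noncomputable def tCholLL (D : ℕ) (y μ : Fin D → ℝ)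
    (B : Matrix (Fin D) (Fin D) ℝ) (ν : ℝ) : ℝ :=
  Real.log (Real.Gamma ((ν + D) / 2)) - Real.log (Real.Gamma (ν / 2))
    - ((D : ℝ) / 2) * Real.log ν - ((D : ℝ) / 2) * Real.log Real.pi
    + Real.log B.det
    - ((ν + D) / 2) * Real.log (1 + (∑ k, (B.mulVec (y - μ) k) ^ 2) / ν)

/-!
Replacing `μ i` by `t` moves `z = B (y - μ)` along the line `z - (t - μ i) • B eᵢ`, so
`q' = -2 ⟪z, B eᵢ⟫ = -2 (Bᵀ B (y - μ))ᵢ`; the chain rule through `log (1 + q / ν)` contributes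
the factor `1 / (ν + q)`.
-/

theorem HasDerivAt.sum_sq_apply {m : Type*} [Fintype m] {f : ℝ → m → ℝ} {f' : m → ℝ} {x : ℝ}
    (hf : HasDerivAt f f' x) :
    HasDerivAt (fun t => ∑ k, f t k ^ 2) (2 * ∑ k, f x k * f' k) x := by
  rw [Finset.mul_sum]
  exact HasDerivAt.fun_sum fun k _ =>
    ((hasDerivAt_pi.1 hf k).fun_pow 2).congr_deriv (by push_cast; ring)

theorem hasDerivAt_mulVec_sub_update {m n : Type*} [Fintype m] [Fintype n] [DecidableEq n]
    (B : Matrix m n ℝ) (y μ : n → ℝ) (i : n) (s : ℝ) :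
    HasDerivAt (fun t => B *ᵥ (y - Function.update μ i t)) (fun k => -B k i) s := by
  have h := (hasDerivAt_update μ i s).const_sub y
  refine ((mulVecLin B).toContinuousLinearMap.hasFDerivAt.comp_hasDerivAt s h).congr_deriv ?_
  ext k
  simp [mulVec_neg, mulVec_single]

theorem Matrix.sum_mulVec_mul_eq_transpose_mul_mulVec {m n : Type*} [Fintype m] [Fintype n]
    (B : Matrix m n ℝ) (r : n → ℝ) (i : n) :
    ∑ k, (B *ᵥ r) k * B k i = ((Bᵀ * B) *ᵥ r) i := by
  rw [← mulVec_mulVec, mulVec_transpose]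
  simp [vecMul, dotProduct]

theorem HasDerivAt.log_one_add_div {g : ℝ → ℝ} {g' x ν : ℝ} (hg : HasDerivAt g g' x)
    (hgx : 0 ≤ g x) (hν : 0 < ν) :
    HasDerivAt (fun t => Real.log (1 + g t / ν)) (g' / (ν + g x)) x := by
  convert ((hg.div_const ν).const_add 1).log (by positivity) using 1
  field_simp

theorem tChol_deriv_mu_general (D : ℕ) (y μ : Fin D → ℝ) (ν : ℝ) (hν : 0 < ν)
    (B : Matrix (Fin D) (Fin D) ℝ) (i : Fin D) :
    HasDerivAt (fun t : ℝ => tCholLL D y (Function.update μ i t) B ν)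
      ((ν + D) / (ν + ∑ k, (B.mulVec (y - μ) k) ^ 2) *
        ((B.transpose * B).mulVec (y - μ) i))
      (μ i) := by
  have hq := (hasDerivAt_mulVec_sub_update B y μ i (μ i)).sum_sq_apply.log_one_add_div
    (Finset.sum_nonneg fun k _ => sq_nonneg _) hν
  simp only [Function.update_eq_self, mul_neg, Finset.sum_neg_distrib,
    Matrix.sum_mulVec_mul_eq_transpose_mul_mulVec] at hq
  unfold tCholLL
  refine ((hq.const_mul ((ν + D) / 2)).const_sub _).congr_deriv ?_
  field_simp

/-- First partial derivative of the multivariate t log-likelihood with respect to the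
`i`-th coordinate of the location `μ`: it equals `((ν + D)/(ν + q))·(Ω·(y - μ))_i` with
`Ω = Bᵀ B` and `q = ‖B(y-μ)‖²`. -/
theorem tChol_deriv_mu (D : ℕ) (hD : 1 ≤ D) (y μ : Fin D → ℝ) (ν : ℝ) (hν : 0 < ν)
    (B : Matrix (Fin D) (Fin D) ℝ)
    (hLT : ∀ k l : Fin D, k < l → B k l = 0)
    (hdiag : ∀ k, 0 < B k k) (i : Fin D) :
    HasDerivAt (fun t : ℝ => tCholLL D y (Function.update μ i t) B ν)
      ((ν + D) / (ν + ∑ k, (B.mulVec (y - μ) k) ^ 2) *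
        ((B.transpose * B).mulVec (y - μ) i))
      (μ i) :=
  tChol_deriv_mu_general D y μ ν hν B i
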